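/- Let f : ℝⁿ → ℝ be a C¹-smooth function whose gradient is Lipschitz continuous with constant L > 0, and let {x^k}, {g^k} ⊂ ℝⁿ satisfy x^{k+1} = x^k − (1/L)g^k and ‖g^k − ∇f(x^k)‖ ≤ ν‖g^k‖ for all k, where 0 ≤ ν < 1/2. Assume that ∇f(x^k) ≠ 0 for all k, that x̄ is an accumulation point of {x^k}, and that f satisfies the KL property at x̄ with ψ(t) = M t^q for some M > 0 and q ∈ (1/2, 1). Then there exists c > 0 such that for all sufficiently large k: ‖x^k − x̄‖ ≤ c k^{−(1−q)/(2q−1)}, 0 ≤ f(x^k) − f(x̄) ≤ c k^{−(2−2q)/(2q−1)}, and ‖∇f(x^k)‖ ≤ c k^{−(1−q)/(2q−1)}. -/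

import Mathlib

open Filter Topology InnerProductSpace

local notation "⟪" x ", " y "⟫" => @inner ℝ _ _ x y

lemma rpow_mvt {r b a : ℝ} (hb : 0 < b) (hba : b < a) :
    ∃ c ∈ Set.Ioo b a, a ^ r - b ^ r = r * c ^ (r - 1) * (a - b) := by
  obtain ⟨c, hc, hc2⟩ := exists_hasDerivAt_eq_slope (fun t => t ^ r)
    (fun t => r * t ^ (r - 1)) hba
    (by
      apply ContinuousOn.rpow_const continuousOn_id
      intro t ht
      exact Or.inl (lt_of_lt_of_le hb ht.1).ne')
    (fun t ht => Real.hasDerivAt_rpow_const (Or.inl (hb.trans ht.1).ne'))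
  refine ⟨c, hc, ?_⟩
  rw [eq_div_iff (sub_ne_zero.mpr hba.ne')] at hc2
  linarith

lemma rpow_concave_ineq {p b a : ℝ} (hp : 0 < p) (hp1 : p < 1) (hb : 0 < b) (hba : b ≤ a) :
    p * a ^ (p - 1) * (a - b) ≤ a ^ p - b ^ p := by
  rcases eq_or_lt_of_le hba with h | h
  · simp [h]
  obtain ⟨c, hc, hc2⟩ := rpow_mvt (r := p) hb h
  rw [hc2]
  have ha : (0:ℝ) < a := hb.trans h
  have : a ^ (p - 1) ≤ c ^ (p - 1) := by
    apply Real.rpow_le_rpow_of_nonpos (hb.trans hc.1) hc.2.le (by linarith)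
  have := mul_le_mul_of_nonneg_right (mul_le_mul_of_nonneg_left this hp.le)
    (sub_nonneg.mpr h.le)
  linarith

lemma rpow_convex_ineq {β b a : ℝ} (hβ : 0 < β) (hb : 0 < b) (hba : b ≤ a) :
    a ^ (-β) + β * a ^ (-β - 1) * (a - b) ≤ b ^ (-β) := by
  rcases eq_or_lt_of_le hba with h | h
  · simp [h]
  obtain ⟨c, hc, hc2⟩ := rpow_mvt (r := -β) hb h
  have ha : (0:ℝ) < a := hb.trans h
  have h1 : a ^ (-β - 1) ≤ c ^ (-β - 1) := by
    apply Real.rpow_le_rpow_of_nonpos (hb.trans hc.1) hc.2.le (by linarith)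
  have := mul_le_mul_of_nonneg_right (mul_le_mul_of_nonneg_left h1 hβ.le)
    (sub_nonneg.mpr h.le)
  linarith

lemma descent_lemma {n : ℕ} (f : EuclideanSpace ℝ (Fin n) → ℝ) (hf : ContDiff ℝ 1 f)
    (L : ℝ) (hL : 0 < L)
    (hlip : ∀ x y : EuclideanSpace ℝ (Fin n), ‖gradient f x - gradient f y‖ ≤ L * ‖x - y‖)
    (x y : EuclideanSpace ℝ (Fin n)) :
    f y ≤ f x + ⟪gradient f x, y - x⟫ + L / 2 * ‖y - x‖ ^ 2 := by
  set v := y - x with hv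
  have hdiff : ∀ z, DifferentiableAt ℝ f z := fun z => (hf.differentiable one_ne_zero) z
  have hcontg : Continuous (fun z => gradient f z) := by
    have : LipschitzWith L.toNNReal (fun z => gradient f z) :=
      LipschitzWith.of_dist_le_mul (fun a b => by
        simpa [dist_eq_norm, Real.coe_toNNReal L hL.le] using hlip a b)
    exact this.continuous
  have hpath : Continuous (fun t : ℝ => x + t • v) := by continuity
  have hφ : ∀ t : ℝ, HasDerivAt (fun t : ℝ => f (x + t • v))
      ⟪gradient f (x + t • v), v⟫ t := by
    intro t
    have hγ : HasDerivAt (fun t : ℝ => x + t • v) v t := by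
      simpa using ((hasDerivAt_id t).smul_const v).const_add x
    have hfd := ((hdiff (x + t • v)).hasGradientAt).hasFDerivAt
    have := hfd.comp_hasDerivAt t hγ
    simpa [toDual_apply_apply, Function.comp_def] using this
  have hcont' : Continuous (fun t : ℝ => ⟪gradient f (x + t • v), v⟫) :=
    (hcontg.comp hpath).inner continuous_const
  have key : f (x + (1:ℝ) • v) - f (x + (0:ℝ) • v)
      = ∫ t in (0:ℝ)..1, ⟪gradient f (x + t • v), v⟫ :=
    (intervalIntegral.integral_eq_sub_of_hasDerivAt (fun t _ => hφ t)
      (hcont'.intervalIntegrable 0 1)).symm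
  have hbound : ∫ t in (0:ℝ)..1, ⟪gradient f (x + t • v), v⟫
      ≤ ∫ t in (0:ℝ)..1, (⟪gradient f x, v⟫ + L * ‖v‖ ^ 2 * t) := by
    apply intervalIntegral.integral_mono_on (by norm_num)
      (hcont'.intervalIntegrable 0 1)
      ((continuous_const.add (continuous_const.mul continuous_id)).intervalIntegrable 0 1)
    intro t ht
    have h1 : ⟪gradient f (x + t • v) - gradient f x, v⟫
        ≤ ‖gradient f (x + t • v) - gradient f x‖ * ‖v‖ := real_inner_le_norm _ _
    have h2 : ‖gradient f (x + t • v) - gradient f x‖ ≤ L * (t * ‖v‖) := by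
      have := hlip (x + t • v) x
      simpa [norm_smul, abs_of_nonneg ht.1] using this
    have h3 : ⟪gradient f (x + t • v), v⟫
        = ⟪gradient f x, v⟫ + ⟪gradient f (x + t • v) - gradient f x, v⟫ := by
      rw [inner_sub_left]; ring
    have hvnn : (0:ℝ) ≤ ‖v‖ := norm_nonneg v
    have h4 : ‖gradient f (x + t • v) - gradient f x‖ * ‖v‖ ≤ L * (t * ‖v‖) * ‖v‖ :=
      mul_le_mul_of_nonneg_right h2 hvnn
    have : ⟪gradient f (x + t • v), v⟫ ≤ ⟪gradient f x, v⟫ + L * (t * ‖v‖) * ‖v‖ := by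
      rw [h3]; linarith
    calc ⟪gradient f (x + t • v), v⟫ ≤ ⟪gradient f x, v⟫ + L * (t * ‖v‖) * ‖v‖ := this
      _ = ⟪gradient f x, v⟫ + L * ‖v‖ ^ 2 * t := by ring
  have hrhs : ∫ t in (0:ℝ)..1, (⟪gradient f x, v⟫ + L * ‖v‖ ^ 2 * t)
      = ⟪gradient f x, v⟫ + L / 2 * ‖v‖ ^ 2 := by
    have h1 : IntervalIntegrable (fun t : ℝ => L * ‖v‖ ^ 2 * t) MeasureTheory.volume 0 1 :=
      (by fun_prop : Continuous fun t : ℝ => L * ‖v‖ ^ 2 * t).intervalIntegrable 0 1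
    rw [intervalIntegral.integral_add intervalIntegrable_const h1,
      intervalIntegral.integral_const_mul, integral_id]
    simp
    ring
  have : f (x + (1:ℝ) • v) ≤ f (x + (0:ℝ) • v) + ⟪gradient f x, v⟫ + L / 2 * ‖v‖ ^ 2 := by
    rw [hrhs] at hbound
    linarith [key, hbound]
  simpa [hv] using this

set_option maxHeartbeats 1600000 in
/-- Sublinear convergence rates of iterates, function values, and
gradients for the inexact gradient method under the KL property with q ∈ (1/2, 1). -/
theorem inexact_gradient_method_sublinear_rates {n : ℕ}
    (f : EuclideanSpace ℝ (Fin n) → ℝ) (hf : ContDiff ℝ 1 f)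
    (L : ℝ) (hL : 0 < L)
    (hlip : ∀ x y : EuclideanSpace ℝ (Fin n),
      ‖gradient f x - gradient f y‖ ≤ L * ‖x - y‖)
    (x g : ℕ → EuclideanSpace ℝ (Fin n)) (ν : ℝ) (hν0 : 0 ≤ ν) (hν : ν < 1 / 2)
    (hiter : ∀ k : ℕ, x (k + 1) = x k - (1 / L) • g k)
    (herr : ∀ k : ℕ, ‖g k - gradient f (x k)‖ ≤ ν * ‖g k‖)
    (hgrad : ∀ k : ℕ, gradient f (x k) ≠ 0)
    (xbar : EuclideanSpace ℝ (Fin n))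
    (hacc : ∃ φ : ℕ → ℕ, StrictMono φ ∧ Tendsto (fun k => x (φ k)) atTop (𝓝 xbar))
    (M q : ℝ) (hM : 0 < M) (hq : q ∈ Set.Ioo (1 / 2 : ℝ) 1)
    (hKL : ∃ η > (0 : ℝ), ∃ U ∈ 𝓝 xbar,
      ∀ y ∈ U, f xbar < f y → f y < f xbar + η →
        M * (f y - f xbar) ^ q ≤ ‖gradient f y‖) :
    ∃ c > (0 : ℝ), ∀ᶠ k in atTop,
      ‖x k - xbar‖ ≤ c * (k : ℝ) ^ (-(1 - q) / (2 * q - 1)) ∧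
      0 ≤ f (x k) - f xbar ∧
      f (x k) - f xbar ≤ c * (k : ℝ) ^ (-(2 - 2 * q) / (2 * q - 1)) ∧
      ‖gradient f (x k)‖ ≤ c * (k : ℝ) ^ (-(1 - q) / (2 * q - 1)) := by
  obtain ⟨φ, hφmono, hφtend⟩ := hacc
  obtain ⟨hq1, hq2⟩ := hq
  obtain ⟨η, hη, U, hU, hKLprop⟩ := hKL
  set p : ℝ := 1 - q with hpdef
  set β : ℝ := 2 * q - 1 with hβdef
  have hp : 0 < p := by simp only [hpdef]; linarith
  have hp1 : p < 1 := by simp only [hpdef]; linarith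
  have hphalf : p ≤ 1 / 2 := by simp only [hpdef]; linarith
  have hβ : 0 < β := by simp only [hβdef]; linarith
  set r : ℕ → EuclideanSpace ℝ (Fin n) := fun k => gradient f (x k) with hrdef
  set Δ : ℕ → ℝ := fun k => f (x k) - f xbar with hΔdef
  have hfc : Continuous f := hf.continuous
  -- norm comparisons between g and gradient
  have hg1 : ∀ k, ‖r k‖ ≤ (1 + ν) * ‖g k‖ := by
    intro k
    have h1 : ‖r k‖ = ‖g k - (g k - r k)‖ := by rw [sub_sub_cancel]
    calc ‖r k‖ = ‖g k - (g k - r k)‖ := h1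
      _ ≤ ‖g k‖ + ‖g k - r k‖ := norm_sub_le _ _
      _ ≤ ‖g k‖ + ν * ‖g k‖ := by linarith [herr k]
      _ = (1 + ν) * ‖g k‖ := by ring
  have hg2 : ∀ k, (1 - ν) * ‖g k‖ ≤ ‖r k‖ := by
    intro k
    have : ‖g k‖ ≤ ‖r k‖ + ‖g k - r k‖ := by
      calc ‖g k‖ = ‖r k + (g k - r k)‖ := by rw [add_sub_cancel]
        _ ≤ ‖r k‖ + ‖g k - r k‖ := norm_add_le _ _
    have := herr k
    linarith [this]
  have hrpos : ∀ k, 0 < ‖r k‖ := fun k => norm_pos_iff.mpr (hgrad k)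
  have hgpos : ∀ k, 0 < ‖g k‖ := by
    intro k
    by_contra h
    push_neg at h
    have h0 : ‖g k‖ = 0 := le_antisymm h (norm_nonneg _)
    have h1 := hg1 k
    rw [h0] at h1
    nlinarith [hrpos k]
  -- sufficient decrease
  have hdec : ∀ k, f (x (k+1)) ≤ f (x k) - (1/2 - ν)/L * ‖g k‖^2 := by
    intro k
    have hd := descent_lemma f hf L hL hlip (x k) (x (k+1))
    have hxy : x (k+1) - x k = -((1/L) • g k) := by rw [hiter k]; abel
    have hinner : ⟪r k, x (k+1) - x k⟫ = -(1/L) * ⟪r k, g k⟫ := by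
      rw [hxy, inner_neg_right, real_inner_smul_right]; ring
    have hIP : (1 - ν) * ‖g k‖^2 ≤ ⟪r k, g k⟫ := by
      have e1 : ⟪g k - r k, g k⟫ ≤ ‖g k - r k‖ * ‖g k‖ := real_inner_le_norm _ _
      have e2 : ‖g k - r k‖ * ‖g k‖ ≤ ν * ‖g k‖ * ‖g k‖ :=
        mul_le_mul_of_nonneg_right (herr k) (norm_nonneg _)
      have e3 : ⟪g k - r k, g k⟫ = ‖g k‖^2 - ⟪r k, g k⟫ := by
        rw [inner_sub_left, real_inner_self_eq_norm_sq]
      have e4 : ν * ‖g k‖ * ‖g k‖ = ν * ‖g k‖^2 := by ring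
      linarith [e1, e2, e3, e4]
    have hnorm2 : ‖x (k+1) - x k‖^2 = (1/L)^2 * ‖g k‖^2 := by
      rw [hxy, norm_neg, norm_smul]
      rw [Real.norm_eq_abs, abs_of_nonneg (by positivity : (0:ℝ) ≤ 1/L)]
      ring
    rw [hnorm2, hinner] at hd
    have hL' : (0:ℝ) < 1/L := by positivity
    have h5 : (1/L) * ((1-ν) * ‖g k‖^2) ≤ (1/L) * ⟪r k, g k⟫ :=
      mul_le_mul_of_nonneg_left hIP hL'.le
    have heq : f (x k) - (1/L) * ((1-ν) * ‖g k‖^2) + L/2 * ((1/L)^2 * ‖g k‖^2)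
        = f (x k) - (1/2 - ν)/L * ‖g k‖^2 := by field_simp; ring
    linarith [hd, h5, heq]
  set ρ : ℝ := (1/2 - ν)/(L * (1+ν)^2) with hρdef
  have hρ : 0 < ρ := by
    apply div_pos (by linarith) (by positivity)
  have hdec2 : ∀ k, ρ * ‖r k‖^2 ≤ f (x k) - f (x (k+1)) := by
    intro k
    have h1 : ‖r k‖^2 ≤ (1+ν)^2 * ‖g k‖^2 := by nlinarith [hg1 k, norm_nonneg (r k), norm_nonneg (g k)]
    have h2 : ρ * ‖r k‖^2 ≤ ρ * ((1+ν)^2 * ‖g k‖^2) := mul_le_mul_of_nonneg_left h1 hρ.le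
    have h3 : ρ * ((1+ν)^2 * ‖g k‖^2) = (1/2 - ν)/L * ‖g k‖^2 := by
      rw [hρdef]
      field_simp
    linarith [hdec k, h2, h3]
  set A : ℝ := 1/((1-ν)*L) with hAdef
  have h1ν : (0:ℝ) < 1 - ν := by linarith
  have hA : 0 < A := by rw [hAdef]; exact one_div_pos.mpr (mul_pos h1ν hL)
  have hstep : ∀ k, ‖x (k+1) - x k‖ ≤ A * ‖r k‖ := by
    intro k
    have hxy : x (k+1) - x k = -((1/L) • g k) := by rw [hiter k]; abel
    have h1 : ‖x (k+1) - x k‖ = (1/L) * ‖g k‖ := by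
      rw [hxy, norm_neg, norm_smul, Real.norm_eq_abs, abs_of_nonneg (by positivity : (0:ℝ) ≤ 1/L)]
    have h2 := hg2 k
    have e : 1/L * ‖g k‖ = A * ((1-ν) * ‖g k‖) := by
      rw [hAdef]
      field_simp
    rw [h1, e]
    exact mul_le_mul_of_nonneg_left h2 hA.le
  -- monotonicity and limits
  have hanti : Antitone (fun k => f (x k)) := by
    apply antitone_nat_of_succ_le
    intro k
    nlinarith [hdec2 k, sq_nonneg ‖r k‖, hρ]
  have hfxbar_le : ∀ k, f xbar ≤ f (x k) := by
    intro k
    have htd : Tendsto (fun i => f (x (φ i))) atTop (𝓝 (f xbar)) :=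
      (hfc.tendsto xbar).comp hφtend
    apply le_of_tendsto htd
    filter_upwards [eventually_ge_atTop k] with i hi
    exact hanti (le_trans hi (hφmono.le_apply))
  have hΔpos : ∀ k, 0 < Δ k := by
    intro k
    have h1 := hdec2 k
    have h2 := hfxbar_le (k+1)
    have h3 : 0 < ρ * ‖r k‖^2 := mul_pos hρ (pow_pos (hrpos k) 2)
    simp only [hΔdef]
    linarith
  have hΔanti : ∀ j k', j ≤ k' → Δ k' ≤ Δ j := by
    intro j k' h
    simp only [hΔdef]
    have := hanti h
    linarith [hanti h]
  have hftend : Tendsto (fun k => f (x k)) atTop (𝓝 (f xbar)) := by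
    have hbdd : BddBelow (Set.range fun k => f (x k)) := by
      refine ⟨f xbar, ?_⟩
      rintro y ⟨k, rfl⟩
      exact hfxbar_le k
    have h1 := tendsto_atTop_ciInf hanti hbdd
    have h2 : Tendsto (fun i => f (x (φ i))) atTop (𝓝 (⨅ k, f (x k))) :=
      h1.comp hφmono.tendsto_atTop
    have h3 : Tendsto (fun i => f (x (φ i))) atTop (𝓝 (f xbar)) :=
      (hfc.tendsto xbar).comp hφtend
    have : (⨅ k, f (x k)) = f xbar := tendsto_nhds_unique h2 h3
    rwa [this] at h1
  have hΔtend : Tendsto Δ atTop (𝓝 0) := by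
    have := hftend.sub_const (f xbar)
    simpa [hΔdef] using this
  -- KL in usable form
  obtain ⟨ε, hε, hballU⟩ := Metric.mem_nhds_iff.mp hU
  have hKL' : ∀ k, x k ∈ Metric.ball xbar ε → Δ k < η → M * (Δ k) ^ q ≤ ‖r k‖ := by
    intro k h1 h2
    have h3 := hΔpos k
    simp only [hΔdef] at h3 h2 ⊢
    exact hKLprop _ (hballU h1) (by linarith) (by linarith)
  set K : ℝ := A / (p * ρ * M) with hKdef
  have hK : 0 < K := by
    rw [hKdef]
    exact div_pos hA (by positivity)
  -- one-step KL estimate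
  have hψ : ∀ k, x k ∈ Metric.ball xbar ε → Δ k < η →
      ‖x (k+1) - x k‖ ≤ K * ((Δ k) ^ p - (Δ (k+1)) ^ p) := by
    intro k hin hlt
    have ha : 0 < Δ k := hΔpos k
    have hb : 0 < Δ (k+1) := hΔpos (k+1)
    have hba : Δ (k+1) ≤ Δ k := hΔanti k (k+1) (by omega)
    have hconc := rpow_concave_ineq hp hp1 hb hba
    have hKLk := hKL' k hin hlt
    have hu : 0 < ‖r k‖ := hrpos k
    have hexp : (Δ k) ^ (p - 1) = (Δ k) ^ (-q) := by
      congr 1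
      simp only [hpdef]
      ring
    rw [hexp] at hconc
    have hqq : (Δ k) ^ q * (Δ k) ^ (-q) = 1 := by
      rw [← Real.rpow_add ha]
      simp
    have haq : 0 < (Δ k) ^ (-q) := Real.rpow_pos_of_pos ha _
    -- M ≤ ‖r k‖ * (Δ k)^(-q)
    have h2 : M ≤ ‖r k‖ * (Δ k) ^ (-q) := by
      have := mul_le_mul_of_nonneg_right hKLk haq.le
      rw [mul_assoc, hqq, mul_one] at this
      linarith
    have h3 : ρ * ‖r k‖^2 ≤ Δ k - Δ (k+1) := by
      have := hdec2 k
      simp only [hΔdef]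
      linarith
    -- p * ρ * M * ‖r k‖ ≤ Δ k ^ p - Δ (k+1) ^ p
    have h4 : p * ρ * M * ‖r k‖ ≤ (Δ k) ^ p - (Δ (k+1)) ^ p := by
      have e2 : M * ‖r k‖ ≤ (Δ k) ^ (-q) * ‖r k‖^2 := by
        calc M * ‖r k‖ ≤ ‖r k‖ * (Δ k) ^ (-q) * ‖r k‖ :=
              mul_le_mul_of_nonneg_right h2 hu.le
          _ = (Δ k) ^ (-q) * ‖r k‖^2 := by ring
      have e3 : ρ * (M * ‖r k‖) ≤ (Δ k) ^ (-q) * (Δ k - Δ (k+1)) := by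
        calc ρ * (M * ‖r k‖) ≤ ρ * ((Δ k) ^ (-q) * ‖r k‖^2) :=
              mul_le_mul_of_nonneg_left e2 hρ.le
          _ = (Δ k) ^ (-q) * (ρ * ‖r k‖^2) := by ring
          _ ≤ (Δ k) ^ (-q) * (Δ k - Δ (k+1)) := mul_le_mul_of_nonneg_left h3 haq.le
      have e4 := mul_le_mul_of_nonneg_left e3 hp.le
      calc p * ρ * M * ‖r k‖ = p * (ρ * (M * ‖r k‖)) := by ring
        _ ≤ p * ((Δ k) ^ (-q) * (Δ k - Δ (k+1))) := e4
        _ = p * (Δ k) ^ (-q) * (Δ k - Δ (k+1)) := by ring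
        _ ≤ (Δ k) ^ p - (Δ (k+1)) ^ p := hconc
    have hpos : (0:ℝ) < p * ρ * M := by positivity
    calc ‖x (k+1) - x k‖ ≤ A * ‖r k‖ := hstep k
      _ = K * (p * ρ * M * ‖r k‖) := by
          rw [hKdef]
          field_simp
      _ ≤ K * ((Δ k) ^ p - (Δ (k+1)) ^ p) := mul_le_mul_of_nonneg_left h4 hK.le
  -- choose the anchor index k0
  have hΔnn : ∀ k, 0 ≤ (Δ k) ^ p := fun k => Real.rpow_nonneg (hΔpos k).le _
  have hΔφ : Tendsto (fun i => Δ (φ i)) atTop (𝓝 0) := hΔtend.comp hφmono.tendsto_atTop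
  have hΔφp : Tendsto (fun i => K * (Δ (φ i)) ^ p) atTop (𝓝 0) := by
    have hc : ContinuousAt (fun t : ℝ => t ^ p) 0 :=
      Real.continuousAt_rpow_const 0 p (Or.inr hp.le)
    have h1 := hc.tendsto.comp hΔφ
    rw [Real.zero_rpow hp.ne'] at h1
    have h2 := h1.const_mul K
    simpa using h2
  have hnφ : Tendsto (fun i => ‖x (φ i) - xbar‖) atTop (𝓝 0) := by
    have := (hφtend.sub_const xbar).norm
    simpa using this
  have hsum : Tendsto (fun i => ‖x (φ i) - xbar‖ + K * (Δ (φ i)) ^ p) atTop (𝓝 0) := by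
    have := hnφ.add hΔφp
    simpa using this
  obtain ⟨i0, hk0ε, hk0η⟩ := ((hsum.eventually_lt_const hε).and
    (hΔφ.eventually_lt_const hη)).exists
  set k0 : ℕ := φ i0 with hk0def
  -- trap induction anchored at k0
  have hT : ∀ m, ‖x (k0 + m) - x k0‖ ≤ K * ((Δ k0) ^ p - (Δ (k0 + m)) ^ p) := by
    intro m
    induction m with
    | zero => simp
    | succ m ih =>
      have hmem : x (k0 + m) ∈ Metric.ball xbar ε := by
        rw [Metric.mem_ball, dist_eq_norm]
        have h5 : ‖x (k0 + m) - xbar‖ ≤ ‖x (k0 + m) - x k0‖ + ‖x k0 - xbar‖ :=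
          norm_sub_le_norm_sub_add_norm_sub _ _ _
        have h7 : 0 ≤ K * (Δ (k0 + m)) ^ p := mul_nonneg hK.le (hΔnn _)
        have h8 : K * ((Δ k0) ^ p - (Δ (k0 + m)) ^ p)
            = K * (Δ k0) ^ p - K * (Δ (k0 + m)) ^ p := by ring
        linarith [ih, hk0ε]
      have hηm : Δ (k0 + m) < η :=
        lt_of_le_of_lt (hΔanti k0 (k0 + m) (Nat.le_add_right _ _)) hk0η
      have hstepm := hψ (k0 + m) hmem hηm
      have e : k0 + (m + 1) = (k0 + m) + 1 := by omega
      rw [e]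
      calc ‖x ((k0 + m) + 1) - x k0‖
          ≤ ‖x ((k0 + m) + 1) - x (k0 + m)‖ + ‖x (k0 + m) - x k0‖ :=
            norm_sub_le_norm_sub_add_norm_sub _ _ _
        _ ≤ K * ((Δ (k0 + m)) ^ p - (Δ ((k0 + m) + 1)) ^ p)
            + K * ((Δ k0) ^ p - (Δ (k0 + m)) ^ p) := add_le_add hstepm ih
        _ = K * ((Δ k0) ^ p - (Δ ((k0 + m) + 1)) ^ p) := by ring
  have hball : ∀ k, k0 ≤ k → x k ∈ Metric.ball xbar ε := by
    intro k hk
    obtain ⟨m, rfl⟩ := Nat.le.dest hk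
    rw [Metric.mem_ball, dist_eq_norm]
    have h5 : ‖x (k0 + m) - xbar‖ ≤ ‖x (k0 + m) - x k0‖ + ‖x k0 - xbar‖ :=
      norm_sub_le_norm_sub_add_norm_sub _ _ _
    have h7 : 0 ≤ K * (Δ (k0 + m)) ^ p := mul_nonneg hK.le (hΔnn _)
    have h8 : K * ((Δ k0) ^ p - (Δ (k0 + m)) ^ p)
        = K * (Δ k0) ^ p - K * (Δ (k0 + m)) ^ p := by ring
    linarith [hT m, hk0ε]
  have hη' : ∀ k, k0 ≤ k → Δ k < η := fun k hk =>
    lt_of_le_of_lt (hΔanti k0 k hk) hk0η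
  -- general tail bound
  have hT2 : ∀ k, k0 ≤ k → ∀ m, ‖x (k + m) - x k‖ ≤ K * ((Δ k) ^ p - (Δ (k + m)) ^ p) := by
    intro k hk m
    induction m with
    | zero => simp
    | succ m ih =>
      have hmem := hball (k + m) (le_trans hk (Nat.le_add_right _ _))
      have hstepm := hψ (k + m) hmem (hη' (k + m) (le_trans hk (Nat.le_add_right _ _)))
      have e : k + (m + 1) = (k + m) + 1 := by omega
      rw [e]
      calc ‖x ((k + m) + 1) - x k‖
          ≤ ‖x ((k + m) + 1) - x (k + m)‖ + ‖x (k + m) - x k‖ :=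
            norm_sub_le_norm_sub_add_norm_sub _ _ _
        _ ≤ K * ((Δ (k + m)) ^ p - (Δ ((k + m) + 1)) ^ p)
            + K * ((Δ k) ^ p - (Δ (k + m)) ^ p) := add_le_add hstepm ih
        _ = K * ((Δ k) ^ p - (Δ ((k + m) + 1)) ^ p) := by ring
  have hdist : ∀ k, k0 ≤ k → ‖x k - xbar‖ ≤ K * (Δ k) ^ p := by
    intro k hk
    have htd : Tendsto (fun i => ‖x (φ i) - x k‖) atTop (𝓝 ‖xbar - x k‖) :=
      (hφtend.sub_const (x k)).norm
    have hlim : ‖xbar - x k‖ ≤ K * (Δ k) ^ p := by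
      apply le_of_tendsto htd
      filter_upwards [eventually_ge_atTop k] with i hi
      have hki : k ≤ φ i := le_trans hi hφmono.le_apply
      obtain ⟨m, hm⟩ := Nat.le.dest hki
      have h9 := hT2 k hk m
      rw [hm] at h9
      have hnn : 0 ≤ (Δ (φ i)) ^ p := hΔnn _
      have h8 : K * ((Δ k) ^ p - (Δ (φ i)) ^ p)
          = K * (Δ k) ^ p - K * (Δ (φ i)) ^ p := by ring
      have h7 : 0 ≤ K * (Δ (φ i)) ^ p := mul_nonneg hK.le hnn
      linarith
    rw [norm_sub_rev]
    exact hlim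
  -- rate recurrence
  set D : ℝ := β * ρ * M ^ 2 with hDdef
  have hD : 0 < D := by rw [hDdef]; positivity
  have hrec1 : ∀ k, k0 ≤ k → Δ k ^ (-β) + D ≤ Δ (k + 1) ^ (-β) := by
    intro k hk
    have ha := hΔpos k
    have hb := hΔpos (k + 1)
    have hba : Δ (k + 1) ≤ Δ k := hΔanti k (k + 1) (by omega)
    have hcvx := rpow_convex_ineq hβ hb hba
    have hKLk := hKL' k (hball k hk) (hη' k hk)
    have h3 : ρ * ‖r k‖ ^ 2 ≤ Δ k - Δ (k + 1) := by
      simp only [hΔdef]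
      linarith [hdec2 k]
    have h4 : (M * Δ k ^ q) ^ 2 ≤ ‖r k‖ ^ 2 := by
      apply pow_le_pow_left₀ (by positivity) hKLk 2
    have hid : Δ k ^ (-β - 1) * (Δ k ^ q) ^ 2 = 1 := by
      rw [← Real.rpow_natCast (Δ k ^ q) 2, ← Real.rpow_mul ha.le, ← Real.rpow_add ha]
      rw [show -β - 1 + q * ((2:ℕ):ℝ) = 0 by push_cast; rw [hβdef]; ring]
      exact Real.rpow_zero _
    have hbb : 0 ≤ β * Δ k ^ (-β - 1) :=
      mul_nonneg hβ.le (Real.rpow_nonneg ha.le _)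
    have h6 : ρ * (M * Δ k ^ q) ^ 2 ≤ Δ k - Δ (k + 1) :=
      le_trans (mul_le_mul_of_nonneg_left h4 hρ.le) h3
    have h7 := mul_le_mul_of_nonneg_left h6 hbb
    have h8 : β * Δ k ^ (-β - 1) * (ρ * (M * Δ k ^ q) ^ 2) = D := by
      have e : β * Δ k ^ (-β - 1) * (ρ * (M * Δ k ^ q) ^ 2)
          = β * ρ * M ^ 2 * (Δ k ^ (-β - 1) * (Δ k ^ q) ^ 2) := by ring
      rw [e, hid, mul_one, hDdef]
    linarith [hcvx, h7, h8]
  have hrecn : ∀ m : ℕ, (m : ℝ) * D ≤ Δ (k0 + m) ^ (-β) := by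
    intro m
    induction m with
    | zero => simpa using Real.rpow_nonneg (hΔpos k0).le (-β)
    | succ m ih =>
      have h1 := hrec1 (k0 + m) (Nat.le_add_right _ _)
      have e : k0 + (m + 1) = (k0 + m) + 1 := by omega
      rw [e]
      push_cast
      linarith
  set C1 : ℝ := (D / 2) ^ (-β⁻¹) with hC1def
  have hC1 : 0 < C1 := Real.rpow_pos_of_pos (by positivity) _
  have hβinv : (0:ℝ) ≤ β⁻¹ := inv_nonneg.mpr hβ.le
  have hrate : ∀ k, 2 * k0 + 2 ≤ k → Δ k ≤ C1 * (k : ℝ) ^ (-β⁻¹) := by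
    intro k hk
    have hk0k : k0 ≤ k := by omega
    obtain ⟨m, rfl⟩ := Nat.le.dest hk0k
    have h0 : k0 ≤ m := by omega
    have h0' : (k0 : ℝ) ≤ (m : ℝ) := Nat.cast_le.mpr h0
    have hkm : ((k0 + m : ℕ) : ℝ) / 2 ≤ (m : ℝ) := by push_cast; linarith
    have hkkpos : (0:ℝ) < ((k0 + m : ℕ) : ℝ) := Nat.cast_pos.mpr (by omega)
    have h1 : ((k0 + m : ℕ) : ℝ) / 2 * D ≤ (m : ℝ) * D :=
      mul_le_mul_of_nonneg_right hkm hD.le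
    have h2 : 0 < ((k0 + m : ℕ) : ℝ) / 2 * D := by positivity
    have h4 : 0 < (m : ℝ) * D := lt_of_lt_of_le h2 h1
    have ha := hΔpos (k0 + m)
    have h5 := Real.rpow_le_rpow_of_nonpos h4 (hrecn m) (neg_nonpos.mpr hβinv)
    have h6 : (Δ (k0 + m) ^ (-β)) ^ (-β⁻¹) = Δ (k0 + m) := by
      rw [← Real.rpow_mul ha.le]
      rw [show (-β) * (-β⁻¹) = 1 by rw [neg_mul_neg, mul_inv_cancel₀ hβ.ne']]
      exact Real.rpow_one _
    have h7 := Real.rpow_le_rpow_of_nonpos h2 h1 (neg_nonpos.mpr hβinv)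
    have h8 : (((k0 + m : ℕ) : ℝ) / 2 * D) ^ (-β⁻¹)
        = C1 * ((k0 + m : ℕ) : ℝ) ^ (-β⁻¹) := by
      rw [show ((k0 + m : ℕ) : ℝ) / 2 * D = ((k0 + m : ℕ) : ℝ) * (D / 2) by ring,
        Real.mul_rpow hkkpos.le (by positivity), mul_comm, hC1def]
    rw [h6] at h5
    calc Δ (k0 + m) ≤ ((m : ℝ) * D) ^ (-β⁻¹) := h5
      _ ≤ (((k0 + m : ℕ) : ℝ) / 2 * D) ^ (-β⁻¹) := h7
      _ = C1 * ((k0 + m : ℕ) : ℝ) ^ (-β⁻¹) := h8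
  -- final constants
  set C2 : ℝ := K * C1 ^ p with hC2def
  have hC2 : 0 < C2 := mul_pos hK (Real.rpow_pos_of_pos hC1 _)
  set C3 : ℝ := Real.sqrt (C1 / ρ) with hC3def
  have hC3 : 0 < C3 := Real.sqrt_pos.mpr (by positivity)
  refine ⟨C1 + C2 + C3 + 1, by linarith, ?_⟩
  filter_upwards [eventually_ge_atTop (2 * k0 + 2)] with k hk
  have hk1 : (1:ℝ) ≤ (k : ℝ) := Nat.one_le_cast.mpr (by omega)
  have hkpos : (0:ℝ) < (k : ℝ) := by linarith
  have hΔk := hrate k hk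
  have ha := hΔpos k
  -- exponent facts
  have hd : (0:ℝ) < 2 * q - 1 := by linarith
  have hexp1 : -β⁻¹ * p = -(1 - q) / (2 * q - 1) := by
    rw [hβdef, hpdef]
    field_simp
  have hexp2 : -β⁻¹ ≤ -(2 - 2 * q) / (2 * q - 1) := by
    rw [hβdef, inv_eq_one_div, neg_div]
    have : (2 - 2 * q) / (2 * q - 1) ≤ 1 / (2 * q - 1) :=
      (div_le_div_iff_of_pos_right hd).mpr (by linarith)
    linarith
  have hexp3 : -β⁻¹ * (1 / 2) ≤ -(1 - q) / (2 * q - 1) := by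
    rw [hβdef, inv_eq_one_div, neg_div]
    have e1 : (1 - q) / (2 * q - 1) ≤ (1 / 2) / (2 * q - 1) :=
      (div_le_div_iff_of_pos_right hd).mpr (by linarith)
    have e2 : (1 / 2) / (2 * q - 1) = 1 / (2 * q - 1) * (1 / 2) := by ring
    linarith [e1, e2.le]
  have hrnn1 : (0:ℝ) ≤ (k : ℝ) ^ (-(1 - q) / (2 * q - 1)) :=
    Real.rpow_nonneg hkpos.le _
  have hrnn2 : (0:ℝ) ≤ (k : ℝ) ^ (-(2 - 2 * q) / (2 * q - 1)) :=
    Real.rpow_nonneg hkpos.le _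
  refine ⟨?_, ha.le, ?_, ?_⟩
  · -- distance bound
    have hdk := hdist k (by omega)
    have hb1 : Δ k ^ p ≤ (C1 * (k : ℝ) ^ (-β⁻¹)) ^ p :=
      Real.rpow_le_rpow ha.le hΔk hp.le
    have hb2 : (C1 * (k : ℝ) ^ (-β⁻¹)) ^ p
        = C1 ^ p * (k : ℝ) ^ (-β⁻¹ * p) := by
      rw [Real.mul_rpow hC1.le (Real.rpow_nonneg hkpos.le _), ← Real.rpow_mul hkpos.le]
    calc ‖x k - xbar‖ ≤ K * Δ k ^ p := hdk
      _ ≤ K * (C1 ^ p * (k : ℝ) ^ (-β⁻¹ * p)) := by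
          rw [← hb2]
          exact mul_le_mul_of_nonneg_left hb1 hK.le
      _ = C2 * (k : ℝ) ^ (-(1 - q) / (2 * q - 1)) := by rw [hexp1, hC2def]; ring
      _ ≤ (C1 + C2 + C3 + 1) * (k : ℝ) ^ (-(1 - q) / (2 * q - 1)) := by
          apply mul_le_mul_of_nonneg_right (by linarith) hrnn1
  · -- function value bound
    have hb1 : (k : ℝ) ^ (-β⁻¹) ≤ (k : ℝ) ^ (-(2 - 2 * q) / (2 * q - 1)) :=
      Real.rpow_le_rpow_of_exponent_le hk1 hexp2
    calc Δ k ≤ C1 * (k : ℝ) ^ (-β⁻¹) := hΔk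
      _ ≤ C1 * (k : ℝ) ^ (-(2 - 2 * q) / (2 * q - 1)) :=
          mul_le_mul_of_nonneg_left hb1 hC1.le
      _ ≤ (C1 + C2 + C3 + 1) * (k : ℝ) ^ (-(2 - 2 * q) / (2 * q - 1)) := by
          apply mul_le_mul_of_nonneg_right (by linarith) hrnn2
  · -- gradient bound
    have h9 : ρ * ‖r k‖ ^ 2 ≤ Δ k := by
      have h10 := hdec2 k
      have h11 := hfxbar_le (k + 1)
      simp only [hΔdef]
      linarith
    have h12 : ‖r k‖ ^ 2 ≤ C1 / ρ * (k : ℝ) ^ (-β⁻¹) := by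
      rw [div_mul_eq_mul_div, le_div_iff₀ hρ]
      calc ‖r k‖ ^ 2 * ρ = ρ * ‖r k‖ ^ 2 := by ring
        _ ≤ Δ k := h9
        _ ≤ C1 * (k : ℝ) ^ (-β⁻¹) := hΔk
    have h13 : ‖r k‖ ≤ Real.sqrt (C1 / ρ * (k : ℝ) ^ (-β⁻¹)) :=
      (Real.le_sqrt (norm_nonneg _) (by positivity)).mpr h12
    have h14 : Real.sqrt (C1 / ρ * (k : ℝ) ^ (-β⁻¹))
        = C3 * (k : ℝ) ^ (-β⁻¹ * (1 / 2)) := by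
      rw [Real.sqrt_mul (by positivity) _, hC3def,
        Real.sqrt_eq_rpow ((k : ℝ) ^ (-β⁻¹)), ← Real.rpow_mul hkpos.le]
    have h15 : (k : ℝ) ^ (-β⁻¹ * (1 / 2)) ≤ (k : ℝ) ^ (-(1 - q) / (2 * q - 1)) :=
      Real.rpow_le_rpow_of_exponent_le hk1 hexp3
    calc ‖r k‖ ≤ C3 * (k : ℝ) ^ (-β⁻¹ * (1 / 2)) := by rw [← h14]; exact h13
      _ ≤ C3 * (k : ℝ) ^ (-(1 - q) / (2 * q - 1)) :=
          mul_le_mul_of_nonneg_left h15 hC3.le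
      _ ≤ (C1 + C2 + C3 + 1) * (k : ℝ) ^ (-(1 - q) / (2 * q - 1)) := by
          apply mul_le_mul_of_nonneg_right (by linarith) hrnn1
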